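/- arXiv:cmp-lg/9502017 — 3 statements merged into one kernel-verified Lean document; each statement's English description precedes it below -/
import Mathlib

section
/- (Soundness of the constraint-solving rules) Let C_s be any constraint system and suppose a single application of one of the constraint-solving rules (Equals), (Feat), (FeatExists), (Subset), (TransConj), (TransClos), (Cycle), (DomPrec) transforms C_s into C'_s. Then for every interpretation I and every variable assignment α, I, α satisfies C_s if and only if I, α satisfies C'_s. -/
/-!
Feature logic with linear precedence (Manandhar, "Deterministic Consistency
Checking of LP Constraints").  `V` is the (countably infinite) set of
variables, `F` the set of relation (feature) symbols and `P` the set of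
precedence symbols; using two distinct types makes `F` and `P` disjoint.
-/

/-- Atomic constraints of the feature logic with linear precedence. -/
inductive Constraint (V F P : Type) : Type
  | eq       : V → V → Constraint V F P              -- x = y
  | feat     : V → F → V → Constraint V F P          -- x = f:y
  | mem      : V → F → V → Constraint V F P          -- x = ∃f:y
  | subset   : V → F → F → V → Constraint V F P      -- x = f:⊇g(y)
  | precPlus : V → P → V → Constraint V F P          -- x = ∃p⁺:y
  | precStar : V → P → V → Constraint V F P          -- x = ∃p*:y
  | domPlus  : F → V → P → F → V → Constraint V F P  -- f(x):p⁺:g(y)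
  | domStar  : F → V → P → F → V → Constraint V F P  -- f(x):p*:g(y)

/-- Satisfaction of an atomic constraint by relations `fI`, `pI` on a
universe `U` and an assignment `α : V → U`. -/
def Sat {V F P U : Type} (fI : F → U → U → Prop) (pI : P → U → U → Prop)
    (α : V → U) : Constraint V F P → Prop
  | .eq x y => α x = α y
  | .feat x f y => ∀ e, fI f (α x) e ↔ e = α y
  | .mem x f y => fI f (α x) (α y)
  | .subset x f g y => ∀ e, fI g (α y) e → fI f (α x) e
  | .precPlus x p y => Relation.TransGen (pI p) (α x) (α y)
  | .precStar x p y => Relation.ReflTransGen (pI p) (α x) (α y)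
  | .domPlus f x p g y => ∀ e₁ e₂, fI f (α x) e₁ → fI g (α y) e₂ →
      Relation.TransGen (pI p) e₁ e₂
  | .domStar f x p g y => ∀ e₁ e₂, fI f (α x) e₁ → fI g (α y) e₂ →
      Relation.ReflTransGen (pI p) e₁ e₂

/-- Satisfaction of a whole constraint system. -/
def SatSet {V F P U : Type} (fI : F → U → U → Prop) (pI : P → U → U → Prop)
    (α : V → U) (Cs : Set (Constraint V F P)) : Prop :=
  ∀ c ∈ Cs, Sat fI pI α c

/-- An interpretation: a nonempty universe, a binary relation for every
symbol in `F` and in `P`, such that the transitive closure of each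
precedence relation is irreflexive. -/
structure Interp (F P : Type) : Type 1 where
  U : Type
  nonempty : Nonempty U
  fI : F → U → U → Prop
  pI : P → U → U → Prop
  irrefl : ∀ (p : P) (a : U), ¬ Relation.TransGen (pI p) a a

/-- A constraint system contains a clash if it contains `x = ∃p⁺:x`;
it is clash-free otherwise. -/
def ClashFree {V F P : Type} (Cs : Set (Constraint V F P)) : Prop :=
  ∀ (x : V) (p : P), Constraint.precPlus x p x ∉ Cs

namespace Constraint

/-- `precC b x p y` is `x = ∃p⁺:y` if `b = true` and `x = ∃p*:y` if `b = false`;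
`b` plays the role of `R` ranging over `{p⁺, p*}`. -/
def precC {V F P : Type} (b : Bool) (x : V) (p : P) (y : V) : Constraint V F P :=
  match b with
  | true => precPlus x p y
  | false => precStar x p y

/-- `domC b f x p g y` is `f(x):p⁺:g(y)` if `b = true` and `f(x):p*:g(y)` otherwise. -/
def domC {V F P : Type} (b : Bool) (f : F) (x : V) (p : P) (g : F) (y : V) :
    Constraint V F P :=
  match b with
  | true => domPlus f x p g y
  | false => domStar f x p g y

variable {V F P : Type} [DecidableEq V]

/-- Replace the variable `a` by `b`. -/
def substV (a b x : V) : V := if x = a then b else x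

/-- `subst a b c` is `c[a := b]`: replace every occurrence of `a` by `b`. -/
def subst (a b : V) : Constraint V F P → Constraint V F P
  | eq x y => eq (substV a b x) (substV a b y)
  | feat x f y => feat (substV a b x) f (substV a b y)
  | mem x f y => mem (substV a b x) f (substV a b y)
  | subset x f g y => subset (substV a b x) f g (substV a b y)
  | precPlus x p y => precPlus (substV a b x) p (substV a b y)
  | precStar x p y => precStar (substV a b x) p (substV a b y)
  | domPlus f x p g y => domPlus f (substV a b x) p g (substV a b y)
  | domStar f x p g y => domStar f (substV a b x) p g (substV a b y)

/-- The variable `a` occurs in the constraint. -/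
def occurs (a : V) : Constraint V F P → Prop
  | eq x y => a = x ∨ a = y
  | feat x _ y => a = x ∨ a = y
  | mem x _ y => a = x ∨ a = y
  | subset x _ _ y => a = x ∨ a = y
  | precPlus x _ y => a = x ∨ a = y
  | precStar x _ y => a = x ∨ a = y
  | domPlus _ x _ _ y => a = x ∨ a = y
  | domStar _ x _ _ y => a = x ∨ a = y

end Constraint

/-- One application of a constraint-solving rule (each rule applies only
if it changes the system). -/
inductive Step {V F P : Type} [DecidableEq V] :
    Set (Constraint V F P) → Set (Constraint V F P) → Prop
  | equals {Cs : Set (Constraint V F P)} {x y : V} (hxy : x ≠ y)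
      (hmem : Constraint.eq x y ∈ Cs)
      (hocc : ∃ c ∈ Cs \ {Constraint.eq x y}, Constraint.occurs x c) :
      Step Cs (insert (Constraint.eq x y)
        (Constraint.subst x y '' (Cs \ {Constraint.eq x y})))
  | feat {Cs : Set (Constraint V F P)} {x : V} {f : F} {y z : V}
      (hy : Constraint.feat x f y ∈ Cs) (hz : Constraint.feat x f z ∈ Cs)
      (hne : y ≠ z) :
      Step Cs (insert (Constraint.eq y z) (Cs \ {Constraint.feat x f z}))
  | featExists {Cs : Set (Constraint V F P)} {x : V} {f : F} {y z : V}
      (hy : Constraint.feat x f y ∈ Cs) (hz : Constraint.mem x f z ∈ Cs)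
      (hnew : Constraint.eq y z ∉ Cs) :
      Step Cs (insert (Constraint.eq y z) Cs)
  | subset {Cs : Set (Constraint V F P)} {x : V} {f g : F} {y z : V}
      (hs : Constraint.subset x f g y ∈ Cs)
      (hG : Constraint.feat y g z ∈ Cs ∨ Constraint.mem y g z ∈ Cs)
      (hnew : Constraint.mem x f z ∉ Cs) :
      Step Cs (insert (Constraint.mem x f z) Cs)
  | transConj {Cs : Set (Constraint V F P)} {x : V} {p : P} {y : V}
      (hstar : Constraint.precStar x p y ∈ Cs)
      (hplus : Constraint.precPlus x p y ∈ Cs) :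
      Step Cs (Cs \ {Constraint.precStar x p y})
  | transClos {Cs : Set (Constraint V F P)} {x y z : V} {p : P} {r₁ r₂ : Bool}
      (h1 : Constraint.precC r₁ x p y ∈ Cs)
      (h2 : Constraint.precC r₂ y p z ∈ Cs)
      (hnp : Constraint.precC true x p z ∉ Cs)
      (hnew : Constraint.precC (r₁ || r₂) x p z ∉ Cs) :
      Step Cs (insert (Constraint.precC (r₁ || r₂) x p z) Cs)
  | cycle {Cs : Set (Constraint V F P)} {x y : V} {p : P}
      (h1 : Constraint.precStar x p y ∈ Cs)
      (h2 : Constraint.precStar y p x ∈ Cs) :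
      Step Cs (insert (Constraint.eq x y)
        (Cs \ {Constraint.precStar x p y, Constraint.precStar y p x}))
  | domPrec {Cs : Set (Constraint V F P)} {f g : F} {x y x₁ y₁ : V} {p : P} {r : Bool}
      (hd : Constraint.domC r f x p g y ∈ Cs)
      (hx : Constraint.mem x f x₁ ∈ Cs) (hy : Constraint.mem y g y₁ ∈ Cs)
      (hnp : Constraint.precC true x₁ p y₁ ∉ Cs)
      (hnew : Constraint.precC r x₁ p y₁ ∉ Cs) :
      Step Cs (insert (Constraint.precC r x₁ p y₁) Cs)

/-- A constraint system is in normal form if no constraint-solving rule applies. -/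
def NormalForm {V F P : Type} [DecidableEq V] (Cs : Set (Constraint V F P)) : Prop :=
  ∀ Cs' : Set (Constraint V F P), ¬ Step Cs Cs'

section Aux

variable {V F P U : Type} [DecidableEq V] {fI : F → U → U → Prop}
  {pI : P → U → U → Prop} {α : V → U}

lemma substV_eval {a b : V} (hα : α a = α b) (v : V) :
    α (Constraint.substV a b v) = α v := by
  unfold Constraint.substV; split <;> simp_all

lemma sat_subst {a b : V} (hα : α a = α b) (c : Constraint V F P) :
    Sat fI pI α (Constraint.subst a b c) ↔ Sat fI pI α c := by
  cases c <;> simp [Constraint.subst, Sat, substV_eval hα]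

lemma sat_precC {b : Bool} {x y : V} {p : P} :
    Sat fI pI α (Constraint.precC b x p y : Constraint V F P) ↔
      (if b then Relation.TransGen (pI p) (α x) (α y)
       else Relation.ReflTransGen (pI p) (α x) (α y)) := by
  cases b <;> simp [Constraint.precC, Sat]

end Aux

/-- **Soundness.**  If a single application of one of the constraint-solving
rules transforms `Cs` into `Cs'`, then every interpretation/assignment pair
satisfies `Cs` iff it satisfies `Cs'`. -/
theorem soundness_of_constraint_solving
    {V F P : Type} [Countable V] [Infinite V] [DecidableEq V]
    (Cs Cs' : Set (Constraint V F P)) (hfin : Cs.Finite)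
    (hstep : Step Cs Cs') (I : Interp F P) (α : V → I.U) :
    SatSet I.fI I.pI α Cs ↔ SatSet I.fI I.pI α Cs' := by
  cases hstep with
  | @equals x y hxy hmem hocc =>
    constructor
    · intro h c hc
      have hα : α x = α y := h _ hmem
      rcases hc with rfl | ⟨c₀, hc₀, rfl⟩
      · exact h _ hmem
      · exact (sat_subst hα _).mpr (h _ hc₀.1)
    · intro h c hc
      have hα : α x = α y := h _ (Set.mem_insert _ _)
      by_cases hcx : c = Constraint.eq x y
      · subst hcx; exact hα
      · exact (sat_subst hα c).mp
          (h _ (Set.mem_insert_of_mem _ ⟨c, ⟨hc, hcx⟩, rfl⟩))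
  | @feat x f y z hy hz hne =>
    constructor
    · intro h c hc
      have h1 := h _ hy
      have h2 := h _ hz
      rcases hc with rfl | hc
      · exact (h2 (α y)).mp ((h1 (α y)).mpr rfl)
      · exact h _ hc.1
    · intro h c hc
      have heq : Sat I.fI I.pI α (Constraint.eq y z) := h _ (Set.mem_insert _ _)
      by_cases hcz : c = Constraint.feat x f z
      · subst hcz
        have h1 : Sat I.fI I.pI α (Constraint.feat x f y) := by
          refine h _ (Set.mem_insert_of_mem _ ⟨hy, ?_⟩)
          simp [hne]
        intro e
        rw [h1 e, heq]
      · exact h _ (Set.mem_insert_of_mem _ ⟨hc, hcz⟩)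
  | @featExists x f y z hy hz hnew =>
    constructor
    · intro h c hc
      rcases hc with rfl | hc
      · have h1 := h _ hy
        exact ((h1 (α z)).mp (h _ hz)).symm
      · exact h _ hc
    · intro h c hc; exact h _ (Set.mem_insert_of_mem _ hc)
  | @subset x f g y z hs hG hnew =>
    constructor
    · intro h c hc
      rcases hc with rfl | hc
      · have hsub := h _ hs
        apply hsub
        rcases hG with hG | hG
        · exact (h _ hG (α z)).mpr rfl
        · exact h _ hG
      · exact h _ hc
    · intro h c hc; exact h _ (Set.mem_insert_of_mem _ hc)
  | @transConj x p y hstar hplus =>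
    constructor
    · intro h c hc; exact h _ hc.1
    · intro h c hc
      by_cases hcs : c = Constraint.precStar x p y
      · subst hcs
        have hp : Sat I.fI I.pI α (Constraint.precPlus x p y) := by
          refine h _ ⟨hplus, ?_⟩; simp
        exact hp.to_reflTransGen
      · exact h _ ⟨hc, hcs⟩
  | @transClos x y z p r₁ r₂ h1 h2 hnp hnew =>
    constructor
    · intro h c hc
      rcases hc with rfl | hc
      · have s1 := (sat_precC).mp (h _ h1)
        have s2 := (sat_precC).mp (h _ h2)
        rw [sat_precC]
        cases r₁ <;> cases r₂ <;> simp_all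
        · exact s1.trans s2
        · exact Relation.TransGen.trans_right s1 s2
        · exact Relation.TransGen.trans_left s1 s2
        · exact s1.trans s2
      · exact h _ hc
    · intro h c hc; exact h _ (Set.mem_insert_of_mem _ hc)
  | @cycle x y p h1 h2 =>
    constructor
    · intro h c hc
      have s1 : Relation.ReflTransGen (I.pI p) (α x) (α y) := h _ h1
      have s2 : Relation.ReflTransGen (I.pI p) (α y) (α x) := h _ h2
      have hα : α x = α y := by
        rcases (Relation.reflTransGen_iff_eq_or_transGen.mp s1) with h' | h'
        · exact h'.symm
        · exact absurd (Relation.TransGen.trans_left h' s2) (I.irrefl p _)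
      rcases hc with rfl | hc
      · exact hα
      · exact h _ hc.1
    · intro h c hc
      have hα : α x = α y := h _ (Set.mem_insert _ _)
      by_cases hc1 : c = Constraint.precStar x p y
      · subst hc1; show Relation.ReflTransGen _ _ _; rw [hα]
      · by_cases hc2 : c = Constraint.precStar y p x
        · subst hc2; show Relation.ReflTransGen _ _ _; rw [hα]
        · refine h _ (Set.mem_insert_of_mem _ ⟨hc, ?_⟩)
          simp [hc1, hc2]
  | @domPrec f g x y x₁ y₁ p r hd hx hy hnp hnew =>
    constructor
    · intro h c hc
      rcases hc with rfl | hc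
      · have hdom := h _ hd
        have hmx : I.fI f (α x) (α x₁) := h _ hx
        have hmy : I.fI g (α y) (α y₁) := h _ hy
        cases r
        · exact hdom _ _ hmx hmy
        · exact hdom _ _ hmx hmy
      · exact h _ hc
    · intro h c hc; exact h _ (Set.mem_insert_of_mem _ hc)
end

section
/- (Linearisation of models) If a constraint system C_s is consistent, then C_s is satisfied by some interpretation I and assignment α in which every precedence symbol p ∈ P is interpreted as a strict total (linear) order on the universe U, i.e., p^I is irreflexive, transitive, and total (for all distinct a, b ∈ U, (a,b) ∈ p^I or (b,a) ∈ p^I). -/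
/-!
Each precedence relation `p^I` has an irreflexive transitive closure, so its reflexive-transitive
closure is a partial order; Szpilrajn's theorem extends it to a linear order, whose strict part is
a strict total order containing `p^I`. Replacing every `p^I` by such an extension keeps the
closures irreflexive, and every constraint stays satisfied because satisfaction is monotone in the
precedence relations (features are untouched).
-/

open Relation

section StrictTotalExtension

variable {α : Type*} {r : α → α → Prop}

theorem isPartialOrder_reflTransGen (h : ∀ a, ¬ TransGen r a a) :
    IsPartialOrder α (ReflTransGen r) where
  refl _ := ReflTransGen.refl
  trans _ _ _ := ReflTransGen.trans
  antisymm a b hab hba := by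
    rcases reflTransGen_iff_eq_or_transGen.mp hab with rfl | hab'
    · rfl
    rcases reflTransGen_iff_eq_or_transGen.mp hba with hba' | hba'
    · exact hba'
    · exact (h a (hab'.trans hba')).elim

theorem IsLinearOrder.isStrictTotalOrder_not_swap {s : α → α → Prop} [IsLinearOrder α s] :
    IsStrictTotalOrder α (fun a b => ¬ s b a) where
  irrefl a h := h (refl_of s a)
  trans a b c hba hcb hca := by
    rcases total_of s a b with hab | hba'
    · exact hcb (trans_of s hca hab)
    · exact hba hba'
  trichotomous a b hab hba :=
    antisymm_of s (not_not.mp hba) (not_not.mp hab)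

theorem exists_isStrictTotalOrder_le (h : ∀ a, ¬ TransGen r a a) :
    ∃ s : α → α → Prop, IsStrictTotalOrder α s ∧ r ≤ s := by
  have := isPartialOrder_reflTransGen h
  obtain ⟨t, ht, hle⟩ := extend_partialOrder (ReflTransGen r)
  refine ⟨fun a b => ¬ t b a, ht.isStrictTotalOrder_not_swap, fun a b hab htba => ?_⟩
  have hab' : t a b := hle a b (ReflTransGen.single hab)
  have : a = b := antisymm_of t hab' htba
  subst this
  exact h a (TransGen.single hab)

end StrictTotalExtension

theorem Sat.mono {V F P U : Type} {fI : F → U → U → Prop} {pI pI' : P → U → U → Prop}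
    {α : V → U} (hp : ∀ p, pI p ≤ pI' p) {c : Constraint V F P} (h : Sat fI pI α c) :
    Sat fI pI' α c := by
  cases c with
  | eq | feat | mem | subset => exact h
  | precPlus x p y => exact TransGen.mono (hp p) _ _ h
  | precStar x p y => exact ReflTransGen.mono (hp p) _ _ h
  | domPlus f x p g y => exact fun e₁ e₂ h₁ h₂ => TransGen.mono (hp p) _ _ (h e₁ e₂ h₁ h₂)
  | domStar f x p g y => exact fun e₁ e₂ h₁ h₂ => ReflTransGen.mono (hp p) _ _ (h e₁ e₂ h₁ h₂)

theorem SatSet.mono {V F P U : Type} {fI : F → U → U → Prop} {pI pI' : P → U → U → Prop}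
    {α : V → U} {Cs : Set (Constraint V F P)} (hp : ∀ p, pI p ≤ pI' p)
    (h : SatSet fI pI α Cs) : SatSet fI pI' α Cs :=
  fun c hc => (h c hc).mono hp

theorem linearisation_of_models_general
    {V F P : Type}
    (Cs : Set (Constraint V F P))
    (hcons : ∃ (I : Interp F P) (α : V → I.U), SatSet I.fI I.pI α Cs) :
    ∃ (I : Interp F P) (α : V → I.U),
      SatSet I.fI I.pI α Cs ∧
      ∀ p : P,
        (∀ a : I.U, ¬ I.pI p a a) ∧
        (∀ a b c : I.U, I.pI p a b → I.pI p b c → I.pI p a c) ∧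
        (∀ a b : I.U, a ≠ b → I.pI p a b ∨ I.pI p b a) := by
  obtain ⟨I, α, hsat⟩ := hcons
  choose s hs hle using fun p => exists_isStrictTotalOrder_le (I.irrefl p)
  have irrefl_transGen (p : P) (a : I.U) : ¬ TransGen (s p) a a := by
    have := hs p
    rw [transGen_eq_self]
    exact irrefl_of (s p) a
  refine ⟨⟨I.U, I.nonempty, I.fI, s, irrefl_transGen⟩, α, hsat.mono hle, fun p => ?_⟩
  have := hs p
  exact ⟨irrefl_of (s p), fun _ _ _ => trans_of (s p),
    fun a b hab => (trichotomous_of (s p) a b).imp_right (Or.resolve_left · hab)⟩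

/-- **Linearisation of models.**  Every consistent constraint system is
satisfied by some interpretation in which every precedence symbol is
interpreted as a strict total (linear) order on the universe. -/
theorem linearisation_of_models
    {V F P : Type} [Countable V] [Infinite V]
    (Cs : Set (Constraint V F P)) (hfin : Cs.Finite)
    (hcons : ∃ (I : Interp F P) (α : V → I.U), SatSet I.fI I.pI α Cs) :
    ∃ (I : Interp F P) (α : V → I.U),
      SatSet I.fI I.pI α Cs ∧
      ∀ p : P,
        (∀ a : I.U, ¬ I.pI p a a) ∧
        (∀ a b c : I.U, I.pI p a b → I.pI p b c → I.pI p a c) ∧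
        (∀ a b : I.U, a ≠ b → I.pI p a b ∨ I.pI p b a) :=
  linearisation_of_models_general Cs hcons
end

section
/- (Soundness of the immediate-precedence rules) Extend the feature logic with constraints x = p:y and x = p⁻¹:y for p ∈ P, where I, α satisfies x = p:y iff p^I(α x) = {α y}, and satisfies x = p⁻¹:y iff {e ∈ U | (e, α x) ∈ p^I} = {α y}. Then each of the following rules preserves the set of satisfying pairs (I, α): (FeatExists') {x=p:y} ∪ C ⇒ {x=p:y, x=∃p:y} ∪ C; (ExistsTrans) {x=∃p:y} ∪ C ⇒ {x=∃p:y, x=∃p⁺:y} ∪ C; (InvIntro) {x=p⁻¹:y} ∪ C ⇒ {y=∃p:x, x=p⁻¹:y} ∪ C; (InvExists) {x=p⁻¹:y, z=∃p:x} ∪ C ⇒ {y=z, x=p⁻¹:y, y=∃p:x} ∪ C, applied when y ≠ z. That is, for every interpretation I and assignment α, I, α satisfies the left-hand system iff it satisfies the right-hand system. -/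
/-- Constraints of the feature logic extended with immediate precedence:
equality `x = y`, membership `x = ∃p:y`, precedence `x = ∃p⁺:y`,
functional precedence `x = p:y` and inverse functional precedence
`x = p⁻¹:y`, for precedence symbols `p ∈ P`. -/
inductive IConstraint (V P : Type) : Type
  | eq       : V → V → IConstraint V P   -- x = y
  | mem      : V → P → V → IConstraint V P  -- x = ∃p:y
  | precPlus : V → P → V → IConstraint V P  -- x = ∃p⁺:y
  | featP    : V → P → V → IConstraint V P  -- x = p:y
  | inv      : V → P → V → IConstraint V P  -- x = p⁻¹:y

/-- Satisfaction of the extended constraints by precedence relations `pI`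
on a universe `U` under an assignment `α`. -/
def ISat {V P U : Type} (pI : P → U → U → Prop) (α : V → U) :
    IConstraint V P → Prop
  | .eq x y => α x = α y
  | .mem x p y => pI p (α x) (α y)
  | .precPlus x p y => Relation.TransGen (pI p) (α x) (α y)
  | .featP x p y => ∀ e, pI p (α x) e ↔ e = α y
  | .inv x p y => ∀ e, pI p e (α x) ↔ e = α y

def ISatSet {V P U : Type} (pI : P → U → U → Prop) (α : V → U)
    (Cs : Set (IConstraint V P)) : Prop :=
  ∀ c ∈ Cs, ISat pI α c

/-- The constraint-solving rules for immediate precedence. -/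
inductive IStep {V P : Type} : Set (IConstraint V P) → Set (IConstraint V P) → Prop
  | featExists' {Cs : Set (IConstraint V P)} {x : V} {p : P} {y : V}
      (h : IConstraint.featP x p y ∈ Cs)
      (hnew : IConstraint.mem x p y ∉ Cs) :
      IStep Cs (insert (IConstraint.mem x p y) Cs)
  | existsTrans {Cs : Set (IConstraint V P)} {x : V} {p : P} {y : V}
      (h : IConstraint.mem x p y ∈ Cs)
      (hnew : IConstraint.precPlus x p y ∉ Cs) :
      IStep Cs (insert (IConstraint.precPlus x p y) Cs)
  | invIntro {Cs : Set (IConstraint V P)} {x : V} {p : P} {y : V}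
      (h : IConstraint.inv x p y ∈ Cs)
      (hnew : IConstraint.mem y p x ∉ Cs) :
      IStep Cs (insert (IConstraint.mem y p x) Cs)
  | invExists {Cs : Set (IConstraint V P)} {x : V} {p : P} {y z : V}
      (h : IConstraint.inv x p y ∈ Cs) (hz : IConstraint.mem z p x ∈ Cs)
      (hne : y ≠ z) :
      IStep Cs (insert (IConstraint.eq y z)
        (insert (IConstraint.mem y p x) (Cs \ {IConstraint.mem z p x})))

/-- **Soundness of the immediate-precedence rules.**  Each of the rules
(FeatExists'), (ExistsTrans), (InvIntro) and (InvExists) preserves the set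
of satisfying interpretation/assignment pairs. -/
theorem immediate_precedence_rules_sound
    {V P : Type} [Countable V] [Infinite V]
    (Cs Cs' : Set (IConstraint V P)) (hfin : Cs.Finite) (hstep : IStep Cs Cs')
    {U : Type} [Nonempty U]
    (pI : P → U → U → Prop)
    (hirr : ∀ (p : P) (a : U), ¬ Relation.TransGen (pI p) a a)
    (α : V → U) :
    ISatSet pI α Cs ↔ ISatSet pI α Cs' := by
  cases hstep with
  | @featExists' x p y h hnew =>
      constructor
      · intro hs c hc
        rcases hc with rfl | hc
        · exact ((hs _ h) (α y)).mpr rfl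
        · exact hs c hc
      · intro hs c hc; exact hs c (Set.mem_insert_of_mem _ hc)
  | @existsTrans x p y h hnew =>
      constructor
      · intro hs c hc
        rcases hc with rfl | hc
        · exact Relation.TransGen.single (hs _ h)
        · exact hs c hc
      · intro hs c hc; exact hs c (Set.mem_insert_of_mem _ hc)
  | @invIntro x p y h hnew =>
      constructor
      · intro hs c hc
        rcases hc with rfl | hc
        · exact ((hs _ h) (α y)).mpr rfl
        · exact hs c hc
      · intro hs c hc; exact hs c (Set.mem_insert_of_mem _ hc)
  | @invExists x p y z h hz hne =>
      have : ISatSet pI α Cs → α y = α z := by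
        intro hs
        have h1 := hs _ h
        have h2 := hs _ hz
        exact (((h1 (α z)).mp h2)).symm
      constructor
      · intro hs c hc
        have hyz := this hs
        rcases hc with rfl | rfl | hc
        · exact hyz
        · show pI p (α y) (α x); rw [hyz]; exact hs _ hz
        · exact hs c hc.1
      · intro hs c hc
        have hyz : α y = α z := hs _ (Set.mem_insert _ _)
        by_cases hcz : c = IConstraint.mem z p x
        · subst hcz
          have hmy : pI p (α y) (α x) :=
            hs _ (Set.mem_insert_of_mem _ (Set.mem_insert _ _))
          show pI p (α z) (α x); rw [← hyz]; exact hmy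
        · exact hs c (Set.mem_insert_of_mem _ (Set.mem_insert_of_mem _ ⟨hc, hcz⟩))
end
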